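/- (Proposition: Combined testing) Under assumptions (A1), (A2), (A4) and the testing logic, for every distribution consistent with the data: (i) whenever the conditioning events have positive probability, P(x=1|y=1,z=1,t=1) = P(x=1|y=1,z=0,t=1) = 1; (ii) if P(y=0,z=0|t=1) > 0 then P(x=0|y=0,z=0,t=1) ∈ [ max{0, 1 − χ̄(1−σ)/P(y=0,z=0|t=1)} , min{1, (1−χ̄)/P(y=0,z=0|t=1)} ]; and (iii) if P(y=0,z=1|t=1) > 0 then P(x=0|y=0,z=1,t=1) ∈ [ max{0, 1 − χ̄(1−σ)/P(y=0,z=1|t=1)} , min{1, (1−χ̄)/P(y=0,z=1|t=1)} ]; where χ̄ = γ/σ, and the bounds in (ii) and (iii) are sharp: each endpoint is attained by some distribution consistent with the data. -/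

import Mathlib

/-!
Population model: a pmf `P` on `{0,1}^4` over `(x, y, z, t)` where `x = true` means truly
infected, `y` is the established test result, `z` the new test result, and `t = true` means
the person belongs to the testing pool.  The testing logic requires `z = 1 → t = 1`.
-/

namespace PaperTest

abbrev Dist := Bool → Bool → Bool → Bool → ℝ

/-- Probability of the event `A` under `P`. -/
noncomputable def pr (P : Dist) (A : Bool → Bool → Bool → Bool → Bool) : ℝ :=
  ∑ x : Bool, ∑ y : Bool, ∑ z : Bool, ∑ t : Bool, if A x y z t then P x y z t else 0

/-- Conditional probability `P(A | B)`. -/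
noncomputable def cpr (P : Dist) (A B : Bool → Bool → Bool → Bool → Bool) : ℝ :=
  pr P (fun x y z t => A x y z t && B x y z t) / pr P B

def IsPMF (P : Dist) : Prop :=
  (∀ x y z t, 0 ≤ P x y z t) ∧
    (∑ x : Bool, ∑ y : Bool, ∑ z : Bool, ∑ t : Bool, P x y z t) = 1

/-- Testing logic: `z = 1` implies `t = 1`, i.e. there is no mass on `z = 1 ∧ t = 0`. -/
def TestLogic (P : Dist) : Prop := ∀ x y, P x y true false = 0

/-- Prevalence `p = P(x=1)`. -/
noncomputable def prev (P : Dist) : ℝ := pr P fun x _ _ _ => x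

/-- Sensitivity of the established test, `σ = P(y=1 | x=1)`. -/
noncomputable def sens (P : Dist) : ℝ := cpr P (fun _ y _ _ => y) (fun x _ _ _ => x)

/-- `τ = P(t=1)`. -/
noncomputable def tau (P : Dist) : ℝ := pr P fun _ _ _ t => t

/-- `γ = P(y=1 | t=1)`. -/
noncomputable def gamma (P : Dist) : ℝ := cpr P (fun _ y _ _ => y) (fun _ _ _ t => t)

/-- `ζ = P(z=1 | t=1)`. -/
noncomputable def zeta (P : Dist) : ℝ := cpr P (fun _ _ z _ => z) (fun _ _ _ t => t)

/-- `χ̄ = γ/σ`, the prevalence in the testing pool. -/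
noncomputable def chibar (P : Dist) : ℝ := gamma P / sens P

/-- (A1) non-trivial prevalence. -/
def A1 (P : Dist) : Prop := 0 < prev P ∧ prev P < 1

/-- (A2) no false positives for the established test: `P(x=0, y=1) = 0`. -/
def A2 (P : Dist) : Prop := pr P (fun x y _ _ => !x && y) = 0

/-- (A3) test monotonicity: `P(x=1 | t=1) ≥ P(x=1 | t=0)`. -/
def A3 (P : Dist) : Prop :=
  cpr P (fun x _ _ _ => x) (fun _ _ _ t => t) ≥ cpr P (fun x _ _ _ => x) (fun _ _ _ t => !t)

/-- (A4) health sufficiency: `P(y=1 | x=1, t=1) = P(y=1 | x=1) = σ`. -/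
def A4 (P : Dist) : Prop := cpr P (fun _ y _ _ => y) (fun x _ _ t => x && t) = sens P

/-- `P(y=1, z=1 | t=1)`. -/
noncomputable def q11 (P : Dist) : ℝ := cpr P (fun _ y z _ => y && z) (fun _ _ _ t => t)

/-- `P(y=1, z=0 | t=1)`. -/
noncomputable def q10 (P : Dist) : ℝ := cpr P (fun _ y z _ => y && !z) (fun _ _ _ t => t)

/-- `P(y=0, z=1 | t=1)`. -/
noncomputable def q01 (P : Dist) : ℝ := cpr P (fun _ y z _ => !y && z) (fun _ _ _ t => t)

/-- `P(y=0, z=0 | t=1)`. -/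
noncomputable def q00 (P : Dist) : ℝ := cpr P (fun _ y z _ => !y && !z) (fun _ _ _ t => t)

/-- `Q` induces the same conditional data distribution `P(y, z | t=1)` and the same
sensitivity `σ` of the established test as `P`. -/
def SameData (P Q : Dist) : Prop :=
  (∀ y0 z0 : Bool,
      cpr Q (fun _ y z _ => (y == y0) && (z == z0)) (fun _ _ _ t => t) =
        cpr P (fun _ y z _ => (y == y0) && (z == z0)) (fun _ _ _ t => t)) ∧
    sens Q = sens P

/-- Assumptions (A1), (A2), (A4), the testing logic, and the maintained regularity
conditions `γ, ζ > 0`, `P(t=1) > 0`, and `γ < σ ≤ 1`. -/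
def Setup (P : Dist) : Prop :=
  IsPMF P ∧ TestLogic P ∧ A1 P ∧ A2 P ∧ A4 P ∧
    0 < gamma P ∧ 0 < zeta P ∧ 0 < tau P ∧ gamma P < sens P ∧ sens P ≤ 1

/-- `Q` is consistent with the data of `P`: it satisfies all assumptions and induces the
same `P(y, z | t=1)` and the same `σ`. -/
def Consistent (P Q : Dist) : Prop := Setup Q ∧ SameData P Q


/-! ### Auxiliary lemmas -/

lemma pr_nonneg (P : Dist) (hP : ∀ x y z t, 0 ≤ P x y z t)
    (A : Bool → Bool → Bool → Bool → Bool) : 0 ≤ pr P A := by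
  refine Finset.sum_nonneg fun _ _ => Finset.sum_nonneg fun _ _ =>
    Finset.sum_nonneg fun _ _ => Finset.sum_nonneg fun _ _ => ?_
  split <;> [exact hP _ _ _ _; exact le_rfl]

/-- All basic numeric facts about a `Setup` distribution. -/
lemma facts (P : Dist) (h : Setup P) :
    0 ≤ q00 P ∧ 0 ≤ q01 P ∧ 0 ≤ q10 P ∧ 0 ≤ q11 P ∧
      q00 P + q01 P + q10 P + q11 P = 1 ∧
      q10 P + q11 P = gamma P ∧ q01 P + q11 P = zeta P ∧
      0 < chibar P ∧ chibar P < 1 ∧ chibar P * sens P = gamma P := by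
  obtain ⟨hpmf, _, _, _, _, hg, hz, hT, hgs, hs1⟩ := h
  have hs : 0 < sens P := lt_trans hg hgs
  have hTne : tau P ≠ 0 := ne_of_gt hT
  have hn : ∀ A, 0 ≤ pr P A := pr_nonneg P hpmf.1
  refine ⟨div_nonneg (hn _) (le_of_lt hT), div_nonneg (hn _) (le_of_lt hT),
    div_nonneg (hn _) (le_of_lt hT), div_nonneg (hn _) (le_of_lt hT), ?_, ?_, ?_, ?_, ?_, ?_⟩
  · have : q00 P + q01 P + q10 P + q11 P = tau P / tau P := by
      rw [q00, q01, q10, q11, cpr, cpr, cpr, cpr, tau, ← add_div, ← add_div,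
        ← add_div]
      congr 1
      simp [pr, Fintype.sum_bool]
      ring
    rw [this, div_self hTne]
  · rw [q10, q11, gamma, cpr, cpr, cpr, ← add_div]
    congr 1
    simp [pr, Fintype.sum_bool]
    ring
  · rw [q01, q11, zeta, cpr, cpr, cpr, ← add_div]
    congr 1
    simp [pr, Fintype.sum_bool]
    ring
  · exact div_pos hg hs
  · exact (div_lt_one hs).2 hgs
  · rw [chibar, div_mul_cancel₀ _ (ne_of_gt hs)]

/-- Pointwise vanishing on `x = 0, y = 1`, and the mass of infected in the pool. -/
lemma key (Q : Dist) (hQ : Setup Q) :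
    (∀ z t, Q false true z t = 0) ∧
      pr Q (fun x _ _ t => x && t) = chibar Q * tau Q := by
  obtain ⟨hpmf, _, _, hA2, hA4, hg, hz, hT, hgs, hs1⟩ := hQ
  have hs : 0 < sens Q := lt_trans hg hgs
  have hnn := hpmf.1
  have hA2' : Q false true true true + Q false true true false +
      (Q false true false true + Q false true false false) = 0 := by
    have := hA2
    rw [A2] at this
    simpa [pr, Fintype.sum_bool] using this
  have h0 : ∀ z t, Q false true z t = 0 := by
    intro z t
    cases z <;> cases t <;>
      nlinarith [hnn false true true true, hnn false true true false,
        hnn false true false true, hnn false true false false]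
  refine ⟨h0, ?_⟩
  have hDatoms : pr Q (fun x _ _ t => x && t) = Q true true true true + Q true true false true +
      (Q true false true true + Q true false false true) := by
    simp [pr, Fintype.sum_bool]
  have hnumA4 : pr Q (fun x y z t => y && (x && t)) =
      Q true true true true + Q true true false true := by
    simp [pr, Fintype.sum_bool]
  have hgam : gamma Q * tau Q = Q true true true true + Q true true false true := by
    have hT' : pr Q (fun _ _ _ t => t) ≠ 0 := hT.ne'
    rw [gamma, cpr, show tau Q = pr Q (fun _ _ _ t => t) from rfl, div_mul_cancel₀ _ hT']
    simp [pr, Fintype.sum_bool, h0]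
  have hA4' : pr Q (fun x y z t => y && (x && t)) = sens Q * pr Q (fun x _ _ t => x && t) := by
    rcases eq_or_lt_of_le (pr_nonneg Q hnn (fun x _ _ t => x && t)) with hD0 | hDpos
    · have h0' : (0:ℝ) = Q true true true true + Q true true false true +
          (Q true false true true + Q true false false true) := hD0.trans hDatoms
      have h1 : Q true true true true = 0 ∧ Q true true false true = 0 := by
        constructor <;>
          nlinarith [hnn true true true true, hnn true true false true,
            hnn true false true true, hnn true false false true]
      rw [hnumA4, h1.1, h1.2, ← hD0]
      ring
    · have := hA4
      simp only [A4, cpr] at this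
      rw [div_eq_iff (ne_of_gt hDpos)] at this
      rw [this]
  have hmain : gamma Q * tau Q = sens Q * pr Q (fun x _ _ t => x && t) := by
    rw [hgam, ← hnumA4, hA4']
  rw [chibar]
  field_simp
  linarith [hmain]


lemma gamma_split (R : Dist) : gamma R = q10 R + q11 R := by
  rw [gamma, q10, q11, cpr, cpr, cpr, ← add_div]
  congr 1
  simp [pr, Fintype.sum_bool]
  ring

lemma transfer (P Q : Dist) (hSD : SameData P Q) :
    q00 Q = q00 P ∧ q01 Q = q01 P ∧ gamma Q = gamma P ∧ chibar Q = chibar P := by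
  have e00 : ∀ R : Dist,
      cpr R (fun _ y z _ => (y == false) && (z == false)) (fun _ _ _ t => t) = q00 R := by
    intro R; rw [q00, cpr, cpr]; congr 1
  have e01 : ∀ R : Dist,
      cpr R (fun _ y z _ => (y == false) && (z == true)) (fun _ _ _ t => t) = q01 R := by
    intro R; rw [q01, cpr, cpr]; congr 1
  have e10 : ∀ R : Dist,
      cpr R (fun _ y z _ => (y == true) && (z == false)) (fun _ _ _ t => t) = q10 R := by
    intro R; rw [q10, cpr, cpr]; congr 1
  have e11 : ∀ R : Dist,
      cpr R (fun _ y z _ => (y == true) && (z == true)) (fun _ _ _ t => t) = q11 R := by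
    intro R; rw [q11, cpr, cpr]; congr 1
  have h00 : q00 Q = q00 P := by rw [← e00 P, ← e00 Q, hSD.1 false false]
  have h01 : q01 Q = q01 P := by rw [← e01 P, ← e01 Q, hSD.1 false true]
  have h10 : q10 Q = q10 P := by rw [← e10 P, ← e10 Q, hSD.1 true false]
  have h11 : q11 Q = q11 P := by rw [← e11 P, ← e11 Q, hSD.1 true true]
  have hg : gamma Q = gamma P := by rw [gamma_split, gamma_split, h10, h11]
  exact ⟨h00, h01, hg, by rw [chibar, chibar, hg, hSD.2]⟩

lemma bound00 (P Q : Dist) (hP : Setup P) (hQ : Setup Q) (hSD : SameData P Q)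
    (hq : 0 < q00 P) :
    cpr Q (fun x _ _ _ => !x) (fun _ y z t => !y && !z && t) ∈
      Set.Icc (max 0 (1 - chibar P * (1 - sens P) / q00 P))
        (min 1 ((1 - chibar P) / q00 P)) := by
  obtain ⟨h0, hxt⟩ := key Q hQ
  have hnn := hQ.1.1
  have hT : 0 < tau Q := hQ.2.2.2.2.2.2.2.1
  obtain ⟨h00, h01, hg, hchi⟩ := transfer P Q hSD
  have hσ : chibar P * sens P = gamma P := (facts P hP).2.2.2.2.2.2.2.2.2
  -- atoms
  have hNa : pr Q (fun _ y z t => !y && !z && t) =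
      Q false false false true + Q true false false true := by
    simp [pr, Fintype.sum_bool]; ring
  have hN : pr Q (fun _ y z t => !y && !z && t) = q00 P * tau Q := by
    rw [← h00, q00, cpr, show tau Q = pr Q (fun _ _ _ t => t) from rfl,
      div_mul_cancel₀ _ (show pr Q (fun _ _ _ t => t) ≠ 0 from hT.ne')]
  have hNpos : 0 < pr Q (fun _ y z t => !y && !z && t) := by
    rw [hN]; exact mul_pos hq hT
  have hTa : tau Q = Q true true true true + Q true true false true +
      Q true false true true + Q true false false true +
      Q false false true true + Q false false false true := by
    rw [tau]; simp [pr, Fintype.sum_bool, h0]; ring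
  have hxta : Q true true true true + Q true true false true +
      Q true false true true + Q true false false true = chibar P * tau Q := by
    rw [← hchi, ← hxt]; simp [pr, Fintype.sum_bool]; ring
  have hgam : Q true true true true + Q true true false true = gamma P * tau Q := by
    have hT' : pr Q (fun _ _ _ t => t) ≠ 0 := hT.ne'
    rw [← hg, gamma, cpr, show tau Q = pr Q (fun _ _ _ t => t) from rfl,
      div_mul_cancel₀ _ hT']
    simp [pr, Fintype.sum_bool, h0]
  have hna : pr Q (fun x y z t => !x && (!y && !z && t)) = Q false false false true := by
    simp [pr, Fintype.sum_bool]
  rw [cpr, hna, Set.mem_Icc]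
  have hsg : sens P * (chibar P * tau Q) = gamma P * tau Q := by
    rw [← hσ]; ring
  constructor
  · apply max_le
    · exact div_nonneg (hnn _ _ _ _) hNpos.le
    · rw [le_div_iff₀ hNpos, hN]
      have expand : (1 - chibar P * (1 - sens P) / q00 P) * (q00 P * tau Q) =
          q00 P * tau Q - (chibar P * tau Q - sens P * (chibar P * tau Q)) := by
        field_simp
      rw [expand, ← hN, hNa, hsg]
      nlinarith [hnn true false true true]
  · apply le_min
    · rw [div_le_one hNpos, hNa]
      nlinarith [hnn true false false true]
    · have hineq : Q false false false true ≤ (1 - chibar P) * tau Q := by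
        nlinarith [hnn false false true true]
      rw [div_le_div_iff₀ hNpos hq, hN]
      calc Q false false false true * q00 P ≤ ((1 - chibar P) * tau Q) * q00 P :=
            mul_le_mul_of_nonneg_right hineq hq.le
        _ = (1 - chibar P) * (q00 P * tau Q) := by ring


lemma bound01 (P Q : Dist) (hP : Setup P) (hQ : Setup Q) (hSD : SameData P Q)
    (hq : 0 < q01 P) :
    cpr Q (fun x _ _ _ => !x) (fun _ y z t => !y && z && t) ∈
      Set.Icc (max 0 (1 - chibar P * (1 - sens P) / q01 P))
        (min 1 ((1 - chibar P) / q01 P)) := by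
  obtain ⟨h0, hxt⟩ := key Q hQ
  have hnn := hQ.1.1
  have hT : 0 < tau Q := hQ.2.2.2.2.2.2.2.1
  obtain ⟨h00, h01, hg, hchi⟩ := transfer P Q hSD
  have hσ : chibar P * sens P = gamma P := (facts P hP).2.2.2.2.2.2.2.2.2
  have hNa : pr Q (fun _ y z t => !y && z && t) =
      Q false false true true + Q true false true true := by
    simp [pr, Fintype.sum_bool]; ring
  have hN : pr Q (fun _ y z t => !y && z && t) = q01 P * tau Q := by
    rw [← h01, q01, cpr, show tau Q = pr Q (fun _ _ _ t => t) from rfl,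
      div_mul_cancel₀ _ (show pr Q (fun _ _ _ t => t) ≠ 0 from hT.ne')]
  have hNpos : 0 < pr Q (fun _ y z t => !y && z && t) := by
    rw [hN]; exact mul_pos hq hT
  have hTa : tau Q = Q true true true true + Q true true false true +
      Q true false true true + Q true false false true +
      Q false false true true + Q false false false true := by
    rw [tau]; simp [pr, Fintype.sum_bool, h0]; ring
  have hxta : Q true true true true + Q true true false true +
      Q true false true true + Q true false false true = chibar P * tau Q := by
    rw [← hchi, ← hxt]; simp [pr, Fintype.sum_bool]; ring
  have hgam : Q true true true true + Q true true false true = gamma P * tau Q := by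
    have hT' : pr Q (fun _ _ _ t => t) ≠ 0 := hT.ne'
    rw [← hg, gamma, cpr, show tau Q = pr Q (fun _ _ _ t => t) from rfl,
      div_mul_cancel₀ _ hT']
    simp [pr, Fintype.sum_bool, h0]
  have hna : pr Q (fun x y z t => !x && (!y && z && t)) = Q false false true true := by
    simp [pr, Fintype.sum_bool]
  rw [cpr, hna, Set.mem_Icc]
  have hsg : sens P * (chibar P * tau Q) = gamma P * tau Q := by
    rw [← hσ]; ring
  constructor
  · apply max_le
    · exact div_nonneg (hnn _ _ _ _) hNpos.le
    · rw [le_div_iff₀ hNpos, hN]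
      have expand : (1 - chibar P * (1 - sens P) / q01 P) * (q01 P * tau Q) =
          q01 P * tau Q - (chibar P * tau Q - sens P * (chibar P * tau Q)) := by
        field_simp
      rw [expand, ← hN, hNa, hsg]
      nlinarith [hnn true false false true]
  · apply le_min
    · rw [div_le_one hNpos, hNa]
      nlinarith [hnn true false true true]
    · have hineq : Q false false true true ≤ (1 - chibar P) * tau Q := by
        nlinarith [hnn false false false true]
      rw [div_le_div_iff₀ hNpos hq, hN]
      calc Q false false true true * q01 P ≤ ((1 - chibar P) * tau Q) * q01 P :=
            mul_le_mul_of_nonneg_right hineq hq.le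
        _ = (1 - chibar P) * (q01 P * tau Q) := by ring


/-- The extremal construction: all mass in the pool, `y = 1` mass fully infected,
`m00`/`m01` infected mass placed in the `(y,z) = (0,0)` and `(0,1)` cells. -/
noncomputable def mkQ (P : Dist) (m00 m01 : ℝ) : Dist := fun x y z t =>
  if t then
    (if x then (if y then (if z then q11 P else q10 P) else (if z then m01 else m00))
     else (if y then 0 else (if z then q01 P - m01 else q00 P - m00)))
  else 0

lemma construct (P : Dist) (h : Setup P) (m00 m01 : ℝ)
    (hm0 : 0 ≤ m00) (hm1 : 0 ≤ m01) (hm2 : m00 ≤ q00 P) (hm3 : m01 ≤ q01 P)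
    (hm4 : m00 + m01 = chibar P * (1 - sens P)) :
    ∃ Q : Dist, Consistent P Q ∧
      cpr Q (fun x _ _ _ => !x) (fun _ y z t => !y && !z && t) = (q00 P - m00) / q00 P ∧
      cpr Q (fun x _ _ _ => !x) (fun _ y z t => !y && z && t) = (q01 P - m01) / q01 P := by
  obtain ⟨h00, h01, h10, h11, hsum, hg', hz', hχ0, hχ1, hχσ⟩ := facts P h
  have hγ : 0 < gamma P := h.2.2.2.2.2.1
  have hζ : 0 < zeta P := h.2.2.2.2.2.2.1
  have hγσ : gamma P < sens P := h.2.2.2.2.2.2.2.2.1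
  have hσ1 : sens P ≤ 1 := h.2.2.2.2.2.2.2.2.2
  have hσ : 0 < sens P := lt_trans hγ hγσ
  have hmm : m00 + m01 = chibar P - gamma P := by
    rw [hm4, mul_sub, mul_one, hχσ]
  set Q := mkQ P m00 m01 with hQdef
  -- atomic computations
  have e6 : pr Q (fun _ _ _ t => t) = 1 := by
    simp [hQdef, mkQ, pr, Fintype.sum_bool]; linarith
  have e1 : pr Q (fun x y _ _ => y && x) = gamma P := by
    simp [hQdef, mkQ, pr, Fintype.sum_bool]; linarith
  have e2 : pr Q (fun x _ _ _ => x) = chibar P := by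
    simp [hQdef, mkQ, pr, Fintype.sum_bool]; linarith
  have e3 : pr Q (fun x y _ t => y && (x && t)) = gamma P := by
    simp [hQdef, mkQ, pr, Fintype.sum_bool]; linarith
  have e4 : pr Q (fun x _ _ t => x && t) = chibar P := by
    simp [hQdef, mkQ, pr, Fintype.sum_bool]; linarith
  have e5 : pr Q (fun _ y _ t => y && t) = gamma P := by
    simp [hQdef, mkQ, pr, Fintype.sum_bool]; linarith
  have e7 : pr Q (fun _ _ z t => z && t) = zeta P := by
    simp [hQdef, mkQ, pr, Fintype.sum_bool]; linarith
  have egs : gamma P / chibar P = sens P := by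
    rw [chibar]
    field_simp
  have hsens : sens Q = sens P := by
    rw [sens, cpr]
    have : (pr Q fun x y z t => (fun _ y _ _ => y) x y z t && (fun x _ _ _ => x) x y z t)
        = gamma P := by rw [← e1]
    rw [this, show (pr Q fun x _ _ _ => x) = chibar P from e2, egs]
  have hA4 : A4 Q := by
    rw [A4, cpr]
    have : (pr Q fun x y z t => (fun _ y _ _ => y) x y z t && (fun x _ _ t => x && t) x y z t)
        = gamma P := by rw [← e3]
    rw [this, show (pr Q fun x _ _ t => x && t) = chibar P from e4, egs, hsens]
  have hgamQ : gamma Q = gamma P := by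
    rw [gamma, cpr]
    have : (pr Q fun x y z t => (fun _ y _ _ => y) x y z t && (fun _ _ _ t => t) x y z t)
        = gamma P := by rw [← e5]
    rw [this, show (pr Q fun _ _ _ t => t) = 1 from e6, div_one]
  have hzetQ : zeta Q = zeta P := by
    rw [zeta, cpr]
    have : (pr Q fun x y z t => (fun _ _ z _ => z) x y z t && (fun _ _ _ t => t) x y z t)
        = zeta P := by rw [← e7]
    rw [this, show (pr Q fun _ _ _ t => t) = 1 from e6, div_one]
  have htauQ : tau Q = 1 := by rw [tau]; exact e6
  have hsetup : Setup Q := by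
    refine ⟨⟨?_, ?_⟩, ?_, ?_, ?_, hA4, ?_, ?_, ?_, ?_, ?_⟩
    · intro x y z t
      cases x <;> cases y <;> cases z <;> cases t <;>
        simp [hQdef, mkQ] <;> linarith
    · simp [hQdef, mkQ, Fintype.sum_bool]; linarith
    · intro x y; simp [hQdef, mkQ]
    · constructor
      · rw [prev, e2]; exact hχ0
      · rw [prev, e2]; exact hχ1
    · rw [A2]; simp [hQdef, mkQ, pr, Fintype.sum_bool]
    · rw [hgamQ]; exact hγ
    · rw [hzetQ]; exact hζ
    · rw [htauQ]; exact one_pos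
    · rw [hgamQ, hsens]; exact hγσ
    · rw [hsens]; exact hσ1
  have e00Q : pr Q (fun _ y z t => (!y && !z) && t) = q00 P := by
    simp [hQdef, mkQ, pr, Fintype.sum_bool]
  have e01Q : pr Q (fun _ y z t => (!y && z) && t) = q01 P := by
    simp [hQdef, mkQ, pr, Fintype.sum_bool]
  have e10Q : pr Q (fun _ y z t => (y && !z) && t) = q10 P := by
    simp [hQdef, mkQ, pr, Fintype.sum_bool]
  have e11Q : pr Q (fun _ y z t => (y && z) && t) = q11 P := by
    simp [hQdef, mkQ, pr, Fintype.sum_bool]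
  have hq00Q : q00 Q = q00 P := by
    rw [q00, cpr]
    have : (pr Q fun x y z t => (fun _ y z _ => !y && !z) x y z t && (fun _ _ _ t => t) x y z t)
        = q00 P := by rw [← e00Q]
    rw [this, show (pr Q fun _ _ _ t => t) = 1 from e6, div_one]
  have hq01Q : q01 Q = q01 P := by
    rw [q01, cpr]
    have : (pr Q fun x y z t => (fun _ y z _ => !y && z) x y z t && (fun _ _ _ t => t) x y z t)
        = q01 P := by rw [← e01Q]
    rw [this, show (pr Q fun _ _ _ t => t) = 1 from e6, div_one]
  have hq10Q : q10 Q = q10 P := by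
    rw [q10, cpr]
    have : (pr Q fun x y z t => (fun _ y z _ => y && !z) x y z t && (fun _ _ _ t => t) x y z t)
        = q10 P := by rw [← e10Q]
    rw [this, show (pr Q fun _ _ _ t => t) = 1 from e6, div_one]
  have hq11Q : q11 Q = q11 P := by
    rw [q11, cpr]
    have : (pr Q fun x y z t => (fun _ y z _ => y && z) x y z t && (fun _ _ _ t => t) x y z t)
        = q11 P := by rw [← e11Q]
    rw [this, show (pr Q fun _ _ _ t => t) = 1 from e6, div_one]
  have e00b : ∀ R : Dist,
      cpr R (fun _ y z _ => (y == false) && (z == false)) (fun _ _ _ t => t) = q00 R := by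
    intro R; rw [q00, cpr, cpr]; congr 1
  have e01b : ∀ R : Dist,
      cpr R (fun _ y z _ => (y == false) && (z == true)) (fun _ _ _ t => t) = q01 R := by
    intro R; rw [q01, cpr, cpr]; congr 1
  have e10b : ∀ R : Dist,
      cpr R (fun _ y z _ => (y == true) && (z == false)) (fun _ _ _ t => t) = q10 R := by
    intro R; rw [q10, cpr, cpr]; congr 1
  have e11b : ∀ R : Dist,
      cpr R (fun _ y z _ => (y == true) && (z == true)) (fun _ _ _ t => t) = q11 R := by
    intro R; rw [q11, cpr, cpr]; congr 1
  have hSD : SameData P Q := by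
    refine ⟨?_, hsens⟩
    intro y0 z0
    cases y0 <;> cases z0
    · rw [e00b, e00b, hq00Q]
    · rw [e01b, e01b, hq01Q]
    · rw [e10b, e10b, hq10Q]
    · rw [e11b, e11b, hq11Q]
  refine ⟨Q, ⟨hsetup, hSD⟩, ?_, ?_⟩
  · rw [cpr]
    have en : (pr Q fun x y z t =>
        (fun x _ _ _ => !x) x y z t && (fun _ y z t => !y && !z && t) x y z t)
        = q00 P - m00 := by
      simp [hQdef, mkQ, pr, Fintype.sum_bool]
    rw [en, show (pr Q fun _ y z t => !y && !z && t) = q00 P from e00Q]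
  · rw [cpr]
    have en : (pr Q fun x y z t =>
        (fun x _ _ _ => !x) x y z t && (fun _ y z t => !y && z && t) x y z t)
        = q01 P - m01 := by
      simp [hQdef, mkQ, pr, Fintype.sum_bool]
    rw [en, show (pr Q fun _ y z t => !y && z && t) = q01 P from e01Q]


lemma endpoint_lo (q c : ℝ) (hq : 0 < q) (hc : 0 ≤ c) :
    (q - min q c) / q = max 0 (1 - c / q) := by
  rcases le_total c q with hle | hle
  · rw [min_eq_right hle, max_eq_right]
    · field_simp
    · rw [sub_nonneg, div_le_one hq]; exact hle
  · rw [min_eq_left hle, sub_self, zero_div, max_eq_left]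
    exact sub_nonpos.2 ((le_div_iff₀ hq).2 (by linarith))

lemma endpoint_hi (q q' c : ℝ) (hq : 0 < q) (hc' : c ≤ q + q') :
    (q - max 0 (c - q')) / q = min 1 ((q + q' - c) / q) := by
  rcases le_total c q' with hle | hle
  · rw [max_eq_left (by linarith), sub_zero, div_self hq.ne', min_eq_left]
    rw [le_div_iff₀ hq, one_mul]; linarith
  · rw [max_eq_right (by linarith), min_eq_right]
    · congr 1; ring
    · rw [div_le_one hq]; linarith

/-- Proposition: Combined testing: for every distribution consistent with
the data: (i) whenever the conditioning events have positive probability,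
`P(x=1 | y=1, z=1, t=1) = P(x=1 | y=1, z=0, t=1) = 1`; (ii) if `P(y=0,z=0|t=1) > 0` then
`P(x=0 | y=0, z=0, t=1) ∈ [max{0, 1 − χ̄(1−σ)/P(y=0,z=0|t=1)}, min{1, (1−χ̄)/P(y=0,z=0|t=1)}]`;
(iii) if `P(y=0,z=1|t=1) > 0` then
`P(x=0 | y=0, z=1, t=1) ∈ [max{0, 1 − χ̄(1−σ)/P(y=0,z=1|t=1)}, min{1, (1−χ̄)/P(y=0,z=1|t=1)}]`;
and the bounds in (ii) and (iii) are sharp. -/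
theorem statement14 (P : Dist) (h : Setup P) :
    (∀ Q : Dist, Consistent P Q →
      (0 < pr Q (fun _ y z t => y && z && t) →
        cpr Q (fun x _ _ _ => x) (fun _ y z t => y && z && t) = 1) ∧
      (0 < pr Q (fun _ y z t => y && !z && t) →
        cpr Q (fun x _ _ _ => x) (fun _ y z t => y && !z && t) = 1)) ∧
    (0 < q00 P →
      (∀ Q : Dist, Consistent P Q →
        cpr Q (fun x _ _ _ => !x) (fun _ y z t => !y && !z && t) ∈
          Set.Icc (max 0 (1 - chibar P * (1 - sens P) / q00 P))
            (min 1 ((1 - chibar P) / q00 P))) ∧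
      (∃ Q : Dist, Consistent P Q ∧
        cpr Q (fun x _ _ _ => !x) (fun _ y z t => !y && !z && t) =
          max 0 (1 - chibar P * (1 - sens P) / q00 P)) ∧
      (∃ Q : Dist, Consistent P Q ∧
        cpr Q (fun x _ _ _ => !x) (fun _ y z t => !y && !z && t) =
          min 1 ((1 - chibar P) / q00 P))) ∧
    (0 < q01 P →
      (∀ Q : Dist, Consistent P Q →
        cpr Q (fun x _ _ _ => !x) (fun _ y z t => !y && z && t) ∈
          Set.Icc (max 0 (1 - chibar P * (1 - sens P) / q01 P))
            (min 1 ((1 - chibar P) / q01 P))) ∧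
      (∃ Q : Dist, Consistent P Q ∧
        cpr Q (fun x _ _ _ => !x) (fun _ y z t => !y && z && t) =
          max 0 (1 - chibar P * (1 - sens P) / q01 P)) ∧
      (∃ Q : Dist, Consistent P Q ∧
        cpr Q (fun x _ _ _ => !x) (fun _ y z t => !y && z && t) =
          min 1 ((1 - chibar P) / q01 P))) := by
  obtain ⟨h00f, h01f, h10f, h11f, hsum, hg', hz', hχ0, hχ1, hχσ⟩ := facts P h
  have hγ : 0 < gamma P := h.2.2.2.2.2.1
  have hγσ : gamma P < sens P := h.2.2.2.2.2.2.2.2.1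
  have hσ1 : sens P ≤ 1 := h.2.2.2.2.2.2.2.2.2
  have hσ : 0 < sens P := lt_trans hγ hγσ
  set c := chibar P * (1 - sens P) with hcdef
  have hc' : c = chibar P - gamma P := by rw [hcdef, mul_sub, mul_one, hχσ]
  have hc0 : 0 ≤ c := by
    rw [hcdef]; exact mul_nonneg hχ0.le (by linarith)
  have hcle : c ≤ q00 P + q01 P := by
    have : q00 P + q01 P = 1 - gamma P := by linarith
    rw [this, hc']; linarith
  have hone : 1 - chibar P = q00 P + q01 P - c := by rw [hc']; linarith
  refine ⟨?_, ?_, ?_⟩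
  · -- part (i)
    intro Q hQc
    obtain ⟨hQ, hSD⟩ := hQc
    obtain ⟨h0, _⟩ := key Q hQ
    constructor
    · intro hpos
      have hd : pr Q (fun _ y z t => y && z && t) = Q true true true true := by
        simp [pr, Fintype.sum_bool, h0]
      have hn : pr Q (fun x y z t => x && (y && z && t)) = Q true true true true := by
        simp [pr, Fintype.sum_bool]
      rw [cpr]
      have hn' : (pr Q fun x y z t =>
          (fun x _ _ _ => x) x y z t && (fun _ y z t => y && z && t) x y z t)
          = Q true true true true := by rw [← hn]
      rw [hn', hd]
      rw [hd] at hpos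
      exact div_self hpos.ne'
    · intro hpos
      have hd : pr Q (fun _ y z t => y && !z && t) = Q true true false true := by
        simp [pr, Fintype.sum_bool, h0]
      have hn : pr Q (fun x y z t => x && (y && !z && t)) = Q true true false true := by
        simp [pr, Fintype.sum_bool]
      rw [cpr]
      have hn' : (pr Q fun x y z t =>
          (fun x _ _ _ => x) x y z t && (fun _ y z t => y && !z && t) x y z t)
          = Q true true false true := by rw [← hn]
      rw [hn', hd]
      rw [hd] at hpos
      exact div_self hpos.ne'
  · -- part (ii)
    intro hq
    refine ⟨fun Q hQc => bound00 P Q h hQc.1 hQc.2 hq, ?_, ?_⟩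
    · -- lower endpoint
      obtain ⟨Q, hcons, hv, _⟩ := construct P h (min (q00 P) c) (c - min (q00 P) c)
        (le_min h00f hc0) (by simp [min_le_right])
        (min_le_left _ _)
        (by rcases le_total (q00 P) c with hle | hle
            · rw [min_eq_left hle]; linarith
            · rw [min_eq_right hle]; linarith)
        (by ring)
      refine ⟨Q, hcons, ?_⟩
      rw [hv, endpoint_lo _ _ hq hc0]
    · -- upper endpoint
      obtain ⟨Q, hcons, hv, _⟩ := construct P h (max 0 (c - q01 P)) (c - max 0 (c - q01 P))
        (le_max_left _ _)
        (by rcases le_total c (q01 P) with hle | hle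
            · rw [max_eq_left (by linarith)]; linarith
            · rw [max_eq_right (by linarith)]; linarith)
        (by apply max_le hq.le; linarith)
        (by rcases le_total c (q01 P) with hle | hle
            · rw [max_eq_left (by linarith)]; linarith
            · rw [max_eq_right (by linarith)]; linarith)
        (by ring)
      refine ⟨Q, hcons, ?_⟩
      rw [hv, endpoint_hi _ _ _ hq hcle, hone]
  · -- part (iii)
    intro hq
    refine ⟨fun Q hQc => bound01 P Q h hQc.1 hQc.2 hq, ?_, ?_⟩
    · -- lower endpoint
      obtain ⟨Q, hcons, _, hv⟩ := construct P h (c - min (q01 P) c) (min (q01 P) c)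
        (by simp [min_le_right])
        (le_min h01f hc0)
        (by rcases le_total (q01 P) c with hle | hle
            · rw [min_eq_left hle]; linarith
            · rw [min_eq_right hle]; linarith)
        (min_le_left _ _)
        (by ring)
      refine ⟨Q, hcons, ?_⟩
      rw [hv, endpoint_lo _ _ hq hc0]
    · -- upper endpoint
      obtain ⟨Q, hcons, _, hv⟩ := construct P h (c - max 0 (c - q00 P)) (max 0 (c - q00 P))
        (by rcases le_total c (q00 P) with hle | hle
            · rw [max_eq_left (by linarith)]; linarith
            · rw [max_eq_right (by linarith)]; linarith)
        (le_max_left _ _)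
        (by rcases le_total c (q00 P) with hle | hle
            · rw [max_eq_left (by linarith)]; linarith
            · rw [max_eq_right (by linarith)]; linarith)
        (by apply max_le hq.le; linarith)
        (by ring)
      refine ⟨Q, hcons, ?_⟩
      rw [hv, endpoint_hi _ _ _ hq (by linarith)]
      rw [show 1 - chibar P = q01 P + q00 P - c from by linarith]


end PaperTest
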